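/- arXiv:1707.05509 — 2 statements merged into one kernel-verified Lean document; each statement's English description precedes it below -/
import Mathlib

section
/- Let n ≥ 1 be odd. The set of points of the Ulam set on the line segment L_n (points a v_0 + b v_1 with a + b = n+1) equals exactly the set of points (n+1-b) v_0 + b v_1 where b ranges over the odd integers 1, 3, 5, ..., n. -/
/-- The Kravitz–Steinerberger description of the Ulam lattice pairs. -/
def UlamPair (a b : ℕ) : Prop :=
  b = 1 ∨ a = 1 ∨ (3 ≤ a ∧ 3 ≤ b ∧ Odd a ∧ Odd b)

-- An even sum forces `a` and `b` to share parity, so the odd–odd clause absorbs every pair but `a = 0`.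
theorem ulamPair_iff_of_even_add {a b : ℕ} (h : Even (a + b)) :
    UlamPair a b ↔ Odd b ∧ 0 < a := by
  have hparity : Odd a ↔ Odd b := by
    rw [Nat.even_add] at h
    simpa only [Nat.not_even_iff_odd] using not_congr h
  constructor
  · rintro (rfl | rfl | ⟨ha, -, -, hb⟩)
    · exact ⟨odd_one, (hparity.mpr odd_one).pos⟩
    · exact ⟨hparity.mp odd_one, one_pos⟩
    · exact ⟨hb, by omega⟩
  · rintro ⟨hb, ha⟩
    have ha' := hparity.mpr hb
    by_cases hb1 : b = 1
    · exact Or.inl hb1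
    by_cases ha1 : a = 1
    · exact Or.inr (Or.inl ha1)
    obtain ⟨k, rfl⟩ := ha'
    obtain ⟨l, rfl⟩ := hb
    exact Or.inr (Or.inr ⟨by omega, by omega, ⟨k, rfl⟩, ⟨l, rfl⟩⟩)

theorem ulam_points_on_segment_odd_param_general
    (v0 v1 : EuclideanSpace ℝ (Fin 2))
    (n : ℕ) (hodd : Odd n) :
    {p : EuclideanSpace ℝ (Fin 2) |
        ∃ a b : ℕ, UlamPair a b ∧ a + b = n + 1 ∧
          p = (a : ℝ) • v0 + (b : ℝ) • v1}
      = {p : EuclideanSpace ℝ (Fin 2) |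
          ∃ b : ℕ, Odd b ∧ b ≤ n ∧
            p = ((n + 1 - b : ℕ) : ℝ) • v0 + (b : ℝ) • v1} := by
  have heven : Even (n + 1) := hodd.add_one
  ext p
  constructor
  · rintro ⟨a, b, hpair, hab, rfl⟩
    obtain ⟨hb, ha⟩ := (ulamPair_iff_of_even_add (hab ▸ heven)).mp hpair
    obtain rfl : a = n + 1 - b := by omega
    exact ⟨b, hb, by omega, rfl⟩
  · rintro ⟨b, hb, hbn, rfl⟩
    have hab : n + 1 - b + b = n + 1 := by omega
    refine ⟨n + 1 - b, b, ?_, hab, rfl⟩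
    exact (ulamPair_iff_of_even_add (by rwa [hab])).mpr ⟨hb, by omega⟩

/-- For odd `n ≥ 1`, the Ulam set points on the line segment `L_n` are exactly
the points `(n+1-b) v₀ + b v₁` where `b` ranges over the odd integers
`1, 3, 5, …, n`. -/
theorem ulam_points_on_segment_odd_param
    (v0 v1 : EuclideanSpace ℝ (Fin 2))
    (hind : LinearIndependent ℝ ![v0, v1])
    (n : ℕ) (hn : 1 ≤ n) (hodd : Odd n) :
    {p : EuclideanSpace ℝ (Fin 2) |
        ∃ a b : ℕ, UlamPair a b ∧ a + b = n + 1 ∧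
          p = (a : ℝ) • v0 + (b : ℝ) • v1}
      = {p : EuclideanSpace ℝ (Fin 2) |
          ∃ b : ℕ, Odd b ∧ b ≤ n ∧
            p = ((n + 1 - b : ℕ) : ℝ) • v0 + (b : ℝ) • v1} :=
  ulam_points_on_segment_odd_param_general v0 v1 n hodd
end

section
/- Let v_0 = (1, φ) and v_1 = (φ, 1) with φ the golden ratio. For odd n ≡ 1 (mod 4), the minimal-norm Ulam point on L_n is ((n+1)/2)(v_0 + v_1) = ((n+1)(1+φ)/2, (n+1)(1+φ)/2), whose Euclidean norm is (n+1)(1+φ)/√2; and this norm is strictly smaller than the norm ‖v_0 + n v_1‖ = ‖(1+nφ, φ+n)‖ of the boundary points for all n ≥ 3 with n ≡ 1 (mod 4). -/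
/-!
Since `‖v₀‖ = ‖v₁‖`, the vectors `v₀ + v₁` and `v₀ - v₁` are orthogonal, and
`a v₀ + b v₁ = ((a + b)/2)(v₀ + v₁) + ((a - b)/2)(v₀ - v₁)`. By Pythagoras, on each line
`a + b = const` the norm is minimised exactly at `a = b`, and strictly so once `v₀ ≠ v₁`.
The boundary point `v₀ + n v₁` has `a ≠ b` for `n ≠ 1`.
-/

noncomputable section

/-- The golden ratio. -/
def φ : ℝ := (1 + Real.sqrt 5) / 2

/-- `v₀ = (1, φ)`. -/
def v0 : EuclideanSpace ℝ (Fin 2) := (WithLp.equiv 2 (Fin 2 → ℝ)).symm ![1, φ]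

/-- `v₁ = (φ, 1)`. -/
def v1 : EuclideanSpace ℝ (Fin 2) := (WithLp.equiv 2 (Fin 2 → ℝ)).symm ![φ, 1]

section InnerProductSpace

variable {F : Type*} [NormedAddCommGroup F] [InnerProductSpace ℝ F] {u v : F}

theorem norm_smul_add_smul_sq_of_norm_eq (h : ‖u‖ = ‖v‖) (a b : ℝ) :
    ‖a • u + b • v‖ ^ 2 = ‖((a + b) / 2) • (u + v)‖ ^ 2 + ‖((a - b) / 2) • (u - v)‖ ^ 2 := by
  have hsplit : a • u + b • v = ((a + b) / 2) • (u + v) + ((a - b) / 2) • (u - v) := by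
    module
  have horth : inner ℝ (((a + b) / 2) • (u + v)) (((a - b) / 2) • (u - v)) = 0 := by
    rw [real_inner_smul_left, real_inner_smul_right, (real_inner_add_sub_eq_zero_iff u v).2 h,
      mul_zero, mul_zero]
  rw [hsplit, sq, sq, sq, norm_add_sq_eq_norm_sq_add_norm_sq_real horth]

theorem norm_midpoint_smul_le_of_norm_eq (h : ‖u‖ = ‖v‖) (a b : ℝ) :
    ‖((a + b) / 2) • (u + v)‖ ≤ ‖a • u + b • v‖ := by
  rw [← sq_le_sq₀ (norm_nonneg _) (norm_nonneg _), norm_smul_add_smul_sq_of_norm_eq h]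
  exact le_add_of_nonneg_right (sq_nonneg _)

theorem norm_midpoint_smul_lt_of_norm_eq (h : ‖u‖ = ‖v‖) (huv : u ≠ v) {a b : ℝ} (hab : a ≠ b) :
    ‖((a + b) / 2) • (u + v)‖ < ‖a • u + b • v‖ := by
  rw [← sq_lt_sq₀ (norm_nonneg _) (norm_nonneg _), norm_smul_add_smul_sq_of_norm_eq h]
  have hne : ((a - b) / 2) • (u - v) ≠ 0 :=
    smul_ne_zero (div_ne_zero (sub_ne_zero.2 hab) two_ne_zero) (sub_ne_zero.2 huv)
  exact lt_add_of_pos_right _ (pow_pos (norm_pos_iff.2 hne) 2)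

end InnerProductSpace

theorem EuclideanSpace.norm_fin_two (x : EuclideanSpace ℝ (Fin 2)) :
    ‖x‖ = √(x 0 ^ 2 + x 1 ^ 2) := by
  simp [EuclideanSpace.norm_eq, Fin.sum_univ_two]

theorem φ_eq_goldenRatio : φ = Real.goldenRatio := rfl

theorem norm_v0_eq_norm_v1 : ‖v0‖ = ‖v1‖ := by
  simp [EuclideanSpace.norm_fin_two, v0, v1, add_comm]

theorem v0_ne_v1 : v0 ≠ v1 := by
  intro h
  have h0 : v0 0 = v1 0 := by rw [h]
  simp only [v0, v1, WithLp.equiv_symm_apply, PiLp.toLp_apply, Matrix.cons_val_zero] at h0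
  exact Real.one_lt_goldenRatio.ne (h0.trans φ_eq_goldenRatio)

theorem norm_v0_add_v1 : ‖v0 + v1‖ = (1 + φ) * √2 := by
  have hφ : 0 ≤ 1 + φ := by linarith [φ_eq_goldenRatio ▸ Real.goldenRatio_pos]
  have hcoords : (v0 + v1) 0 ^ 2 + (v0 + v1) 1 ^ 2 = (1 + φ) ^ 2 * 2 := by
    simp only [v0, v1, WithLp.equiv_symm_apply, PiLp.add_apply, Matrix.cons_val_zero,
      Matrix.cons_val_one, Matrix.cons_val_fin_one]
    ring
  rw [EuclideanSpace.norm_fin_two, hcoords, Real.sqrt_mul (sq_nonneg _), Real.sqrt_sq hφ]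

/-- For `n ≡ 1 (mod 4)` with `n ≥ 3`, the minimal-norm Ulam point on `L_n`
is `((n+1)/2)(v₀+v₁)`, whose Euclidean norm is `(n+1)(1+φ)/√2`, and this
norm is strictly smaller than the norm `‖v₀ + n v₁‖` of the boundary
points. -/
theorem ulam_midpoint_norm_golden :
    ∀ n : ℕ, 3 ≤ n → n % 4 = 1 →
      ‖(((n : ℝ) + 1) / 2) • (v0 + v1)‖ = (n + 1) * (1 + φ) / Real.sqrt 2 ∧
      (∀ a b : ℕ, Odd a → Odd b → 1 ≤ a → 1 ≤ b → a + b = n + 1 →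
        ‖(((n : ℝ) + 1) / 2) • (v0 + v1)‖ ≤ ‖(a : ℝ) • v0 + (b : ℝ) • v1‖) ∧
      ‖(((n : ℝ) + 1) / 2) • (v0 + v1)‖ < ‖v0 + (n : ℝ) • v1‖ := by
  intro n hn _
  refine ⟨?_, fun a b _ _ _ _ hab => ?_, ?_⟩
  · rw [norm_smul, norm_v0_add_v1, Real.norm_of_nonneg (by positivity)]
    field_simp
    rw [Real.sq_sqrt zero_le_two]
    ring
  · have hab' : (n : ℝ) + 1 = a + b := by exact_mod_cast hab.symm
    rw [hab']
    exact norm_midpoint_smul_le_of_norm_eq norm_v0_eq_norm_v1 a b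
  · have hn1 : (1 : ℝ) ≠ n := by exact_mod_cast (by omega : 1 ≠ n)
    have := norm_midpoint_smul_lt_of_norm_eq norm_v0_eq_norm_v1 v0_ne_v1 hn1
    rwa [one_smul, add_comm 1 (n : ℝ)] at this

end
end
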